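/- Let c be a positive integer and let d be an integer coprime to c. Define linear operators u and v on the space of functions φ : ℤ/cℤ → ℂ by (uφ)([n]) = φ([n−1]) and (vφ)([n]) = exp(−2πi d n̄/c)·φ([n]), where n̄ ∈ {0,…,c−1} is the representative of [n]. If T is a ℂ-linear endomorphism of the space of functions ℤ/cℤ → ℂ with T∘u = u∘T and T∘v = v∘T, then T is a scalar multiple of the identity. -/

import Mathlib

/-!
Since `d` is a unit mod `c`, the modulation `m ↦ exp (-2πi d m / c)` is the standard additive
character of `ℤ/cℤ` twisted by an automorphism, hence injective. An operator commuting with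
multiplication by a function with distinct values preserves the eigenlines spanned by the
`Pi.single i`, so it is itself a multiplication operator `φ ↦ f * φ`. Commuting with the shift
makes `f` 1-periodic, hence constant on `ℤ/cℤ`.
-/

open Complex Real

theorem LinearMap.exists_eq_mul_of_commute_mul {ι K : Type*} [Fintype ι] [DecidableEq ι]
    [Field K] {χ : ι → K} (hχ : Function.Injective χ)
    (T : (ι → K) →ₗ[K] (ι → K)) (hT : ∀ φ, T (χ * φ) = χ * T φ) :
    ∃ f : ι → K, ∀ φ, T φ = f * φ := by
  refine ⟨fun i => T (Pi.single i 1) i, LinearMap.congr_fun (?_ : T = LinearMap.mulLeft K _)⟩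
  refine LinearMap.pi_ext' fun i => LinearMap.ext_ring ?_
  ext n
  have hsingle : χ * Pi.single i 1 = χ i • Pi.single i (1 : K) := by
    ext m; by_cases hm : m = i <;> simp [hm]
  have hn := congrFun (hT (Pi.single i 1)) n
  rw [hsingle, map_smul] at hn
  rcases eq_or_ne n i with rfl | hni
  · simp
  · have : (χ i - χ n) * T (Pi.single i 1) n = 0 := by
      simp only [Pi.smul_apply, Pi.mul_apply, smul_eq_mul] at hn; linear_combination hn
    simpa [hni, sub_eq_zero, hχ.ne (Ne.symm hni)] using this

theorem ZMod.apply_eq_apply_zero_of_periodic {c : ℕ} {α : Type*} {f : ZMod c → α}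
    (hf : Function.Periodic f 1) (n : ZMod c) : f n = f 0 := by
  simpa using hf.int_mul_eq (ZMod.cast n : ℤ)

theorem ZMod.injective_exp_neg_mul_val_div {c : ℕ} [NeZero c] {d : ℤ} (hd : IsCoprime d c) :
    Function.Injective fun m : ZMod c => exp (-2 * π * I * d * (m.val : ℂ) / c) := by
  have hunit : IsUnit (d : ZMod c) := (ZMod.coe_int_isUnit_iff_isCoprime d c).2 hd.symm
  have hchar : (fun m : ZMod c => exp (-2 * π * I * d * (m.val : ℂ) / c)) =
      fun m => ZMod.stdAddChar (-(d : ZMod c) * m) := by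
    ext m
    have := ZMod.stdAddChar_coe (N := c) (-d * m.val)
    push_cast [ZMod.natCast_zmod_val] at this
    rw [this]; ring_nf
  rw [hchar]
  exact ZMod.injective_stdAddChar.comp (hunit.neg.mul_right_injective)

theorem commutant_of_finite_heisenberg_representation_is_scalar
    (c : ℕ) (hc : 0 < c) (d : ℤ) (hd : IsCoprime d (c : ℤ))
    (T : (ZMod c → ℂ) →ₗ[ℂ] (ZMod c → ℂ))
    (hTu : ∀ φ : ZMod c → ℂ, ∀ n : ZMod c,
      T (fun m => φ (m - 1)) n = T φ (n - 1))
    (hTv : ∀ φ : ZMod c → ℂ, ∀ n : ZMod c,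
      T (fun m => Complex.exp (-2 * π * I * (d : ℂ) * ((m.val : ℕ) : ℂ) / (c : ℂ)) * φ m) n =
        Complex.exp (-2 * π * I * (d : ℂ) * ((n.val : ℕ) : ℂ) / (c : ℂ)) * T φ n) :
    ∃ lam : ℂ, ∀ φ : ZMod c → ℂ, T φ = lam • φ := by
  have : NeZero c := ⟨hc.ne'⟩
  obtain ⟨f, hf⟩ := T.exists_eq_mul_of_commute_mul (ZMod.injective_exp_neg_mul_val_div hd)
    fun φ => funext (hTv φ)
  have hper : Function.Periodic f 1 := fun n => by
    simpa [hf] using hTu 1 (n + 1)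
  refine ⟨f 0, fun φ => ?_⟩
  ext n
  simp [hf, ZMod.apply_eq_apply_zero_of_periodic hper n]
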